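/- arXiv:2312.12790 — 10 statements merged into one kernel-verified Lean document; each statement's English description precedes it below -/
import Mathlib

section
/- Let n and r be positive integers, let E be an n×r real matrix of rank r (full column rank), let S be an r×n real matrix of rank r (full row rank), and set P = E·S. Then an n×n real matrix Φ satisfies the Born identity S·Φ·E = I_r if and only if Φ is a {1}-inverse of P, i.e. P·Φ·P = P. -/
open Matrix

/-! `P Φ P = E (S Φ E) S` and `P = E 1 S`, so the claim is that `X ↦ E X S` is injective. It is:
a full-column-rank `E` has a left inverse and a full-row-rank `S` has a right inverse. -/

theorem Matrix.ker_mulVecLin_eq_bot_of_rank_eq_card_width {K m n : Type*} [Field K] [Fintype n]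
    (A : Matrix m n K) (hA : A.rank = Fintype.card n) : LinearMap.ker A.mulVecLin = ⊥ := by
  have h := LinearMap.finrank_range_add_finrank_ker A.mulVecLin
  rw [← Matrix.rank, hA, Module.finrank_fintype_fun_eq_card, Nat.add_eq_left] at h
  exact Submodule.finrank_eq_zero.mp h

section FullRank

variable {K m n : Type*} [Field K] [Fintype m] [Fintype n] [DecidableEq m] [DecidableEq n]

theorem Matrix.exists_mul_eq_one_of_rank_eq_card_width (A : Matrix m n K)
    (hA : A.rank = Fintype.card n) : ∃ B : Matrix n m K, B * A = 1 := by
  obtain ⟨g, hg⟩ := A.mulVecLin.exists_leftInverse_of_injective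
    (A.ker_mulVecLin_eq_bot_of_rank_eq_card_width hA)
  refine ⟨LinearMap.toMatrix' g, ?_⟩
  rw [← LinearMap.toMatrix'_id, ← hg, LinearMap.toMatrix'_comp]
  exact congrArg _ (LinearMap.toMatrix'_toLin' A).symm

theorem Matrix.exists_mul_eq_one_of_rank_eq_card_height (A : Matrix m n K)
    (hA : A.rank = Fintype.card m) : ∃ B : Matrix n m K, A * B = 1 := by
  obtain ⟨B, hB⟩ := Aᵀ.exists_mul_eq_one_of_rank_eq_card_width (by rwa [rank_transpose])
  exact ⟨Bᵀ, by rw [← transpose_transpose A, ← transpose_mul, hB, transpose_one]⟩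

end FullRank

theorem Matrix.mul_mul_left_right_cancel {R m n p q : Type*} [Semiring R] [Fintype m]
    [Fintype n] [Fintype p] [Fintype q] [DecidableEq n] [DecidableEq p]
    {E : Matrix m n R} {S : Matrix p q R} {L : Matrix n m R} {T : Matrix q p R}
    (hL : L * E = 1) (hT : S * T = 1) {X Y : Matrix n p R} (h : E * X * S = E * Y * S) :
    X = Y := by
  have hcancel (Z : Matrix n p R) : L * (E * Z * S) * T = Z := by
    rw [← Matrix.mul_assoc L, ← Matrix.mul_assoc L, hL, Matrix.one_mul, Matrix.mul_assoc, hT,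
      Matrix.mul_one]
  rw [← hcancel X, h, hcancel]

theorem born_identity_iff_one_inverse_general
    (n r : ℕ)
    (E : Matrix (Fin n) (Fin r) ℝ) (hE : E.rank = r)
    (S : Matrix (Fin r) (Fin n) ℝ) (hS : S.rank = r)
    (P : Matrix (Fin n) (Fin n) ℝ) (hP : P = E * S)
    (Φ : Matrix (Fin n) (Fin n) ℝ) :
    S * Φ * E = 1 ↔ P * Φ * P = P := by
  have hPΦP : P * Φ * P = E * (S * Φ * E) * S := by simp only [hP, Matrix.mul_assoc]
  have hP_one : P = E * (1 : Matrix (Fin r) (Fin r) ℝ) * S := by rw [hP, Matrix.mul_one]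
  obtain ⟨L, hL⟩ := E.exists_mul_eq_one_of_rank_eq_card_width (by rwa [Fintype.card_fin])
  obtain ⟨T, hT⟩ := S.exists_mul_eq_one_of_rank_eq_card_height (by rwa [Fintype.card_fin])
  exact ⟨fun h ↦ by rw [hPΦP, h, ← hP_one],
    fun h ↦ mul_mul_left_right_cancel hL hT (hPΦP.symm.trans (h.trans hP_one))⟩

/-- For `E` an `n×r` real matrix of full column rank and `S` an `r×n`
real matrix of full row rank, with `P = E * S`, a matrix `Φ` satisfies the Born
identity `S * Φ * E = 1` iff `Φ` is a `{1}`-inverse of `P`, i.e. `P * Φ * P = P`. -/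
theorem born_identity_iff_one_inverse
    (n r : ℕ) (hn : 0 < n) (hr : 0 < r)
    (E : Matrix (Fin n) (Fin r) ℝ) (hE : E.rank = r)
    (S : Matrix (Fin r) (Fin n) ℝ) (hS : S.rank = r)
    (P : Matrix (Fin n) (Fin n) ℝ) (hP : P = E * S)
    (Φ : Matrix (Fin n) (Fin n) ℝ) :
    S * Φ * E = 1 ↔ P * Φ * P = P :=
  born_identity_iff_one_inverse_general n r E hE S hS P hP Φ
end

section
/- Let r ≥ 1, let A be an r×(r−1) real matrix with uᵀA = 0 (u ∈ ℝʳ the all-ones vector), let w ∈ ℝʳ with uᵀw = 1, let α ≠ 0 be real, and let X be an (r−1)×r real matrix with X·w = 0 and X·A = (1/α)·I_{r−1}. Then the self-conditional probability matrix P = w·uᵀ + A·X satisfies P = (1/α)·I_r + (1 − 1/α)·w·uᵀ. In particular, if the measurement is unbiased, i.e. w = (1/r)·u, then P is equiangular: P_ii = 1/α + (1 − 1/α)/r for all i, and P_ij = (1 − 1/α)/r for all i ≠ j. -/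
open Matrix

/-- The hypotheses say that `[vᵀ; X]` is a left inverse of the square block matrix `[w | A]`;
hence it is also a right inverse, and that identity reads `w vᵀ + A X = 1`. -/
theorem Matrix.vecMulVec_add_mul_eq_one {R : Type*} [CommRing R] {m n : Type*}
    [Fintype m] [DecidableEq m] [Fintype n] [DecidableEq n]
    (hcard : Fintype.card n = Fintype.card m + 1) {w v : n → R} {A : Matrix n m R}
    {X : Matrix m n R} (hvw : v ⬝ᵥ w = 1) (hvA : v ᵥ* A = 0) (hXw : X *ᵥ w = 0)
    (hXA : X * A = 1) :
    vecMulVec w v + A * X = 1 := by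
  have hleft : fromRows (replicateRow Unit v) X * fromCols (replicateCol Unit w) A = 1 := by
    rw [fromRows_mul_fromCols, ← fromBlocks_one, hXA]
    congr 1
    · ext; simp [hvw]
    · rw [← replicateRow_vecMul, hvA, replicateRow_zero]
    · rw [← replicateCol_mulVec, hXw, replicateCol_zero]
  rw [mul_eq_one_comm_of_card_eq _ _ _ (by simp [hcard, add_comm]), fromCols_mul_fromRows,
    ← vecMulVec_eq] at hleft
  exact hleft

/-- Under the depolarizing conditions, the self-conditional
probability matrix `P = w·uᵀ + A·X` equals `(1/α)·I + (1 − 1/α)·w·uᵀ`; in the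
unbiased case `w = (1/r)·u`, `P` is equiangular. -/
theorem self_conditional_matrix_equiangular
    (r : ℕ) (hr : 1 ≤ r)
    (A : Matrix (Fin r) (Fin (r - 1)) ℝ) (hA : ∀ j, ∑ i, A i j = 0)
    (w : Fin r → ℝ) (hw : ∑ i, w i = 1)
    (α : ℝ) (hα : α ≠ 0)
    (X : Matrix (Fin (r - 1)) (Fin r) ℝ)
    (hXw : X.mulVec w = 0) (hXA : X * A = α⁻¹ • 1)
    (P : Matrix (Fin r) (Fin r) ℝ)
    (hP : P = Matrix.vecMulVec w (fun _ => 1) + A * X) :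
    P = α⁻¹ • 1 + (1 - α⁻¹) • Matrix.vecMulVec w (fun _ => 1) ∧
    (w = (fun _ => 1 / (r : ℝ)) →
      (∀ i, P i i = 1 / α + (1 - 1 / α) / r) ∧
      (∀ i j, i ≠ j → P i j = (1 - 1 / α) / r)) := by
  have hinv : vecMulVec w (fun _ => 1) + A * (α • X) = 1 :=
    vecMulVec_add_mul_eq_one (by rw [Fintype.card_fin, Fintype.card_fin]; omega)
      (by simpa [dotProduct] using hw) (by ext j; simpa [vecMul, dotProduct] using hA j)
      (by rw [smul_mulVec, hXw, smul_zero])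
      (by rw [smul_mul, hXA, smul_smul, mul_inv_cancel₀ hα, one_smul])
  have hAX : A * X = α⁻¹ • (1 - vecMulVec w (fun _ => 1)) := by
    rw [← hinv, add_sub_cancel_left, Matrix.mul_smul, smul_smul, inv_mul_cancel₀ hα, one_smul]
  have hmain : P = α⁻¹ • 1 + (1 - α⁻¹) • vecMulVec w (fun _ => 1) := by
    rw [hP, hAX]; module
  refine ⟨hmain, fun hunbiased => ⟨fun i => ?_, fun i j hij => ?_⟩⟩
  · simp only [hmain, hunbiased, Matrix.add_apply, Matrix.smul_apply, one_apply_eq,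
      vecMulVec_apply, smul_eq_mul]
    ring
  · simp only [hmain, hunbiased, Matrix.add_apply, Matrix.smul_apply, one_apply_ne hij,
      vecMulVec_apply, smul_eq_mul]
    ring
end

section
/- Let d ≥ 2, let S₁, …, Sₙ be d×d complex matrices each with trace 1 and with squared Frobenius norm 1 (i.e. ∑_{i,j} |Sₘ[i,j]|² = 1, corresponding to pure states), let t₁, …, tₙ be real numbers with ∑ₘ tₘ·Sₘ = I_d, and let α be a nonzero real number. Suppose the d²×d² matrix C with entries C_{(i,j),(k,l)} = ∑ₘ Sₘ[i,j] · conj(tₘ·Sₘ[k,l]) satisfies C = (1/α)·I_{d²} + (1 − 1/α)·(1/d)·J, where J is the d²×d² matrix with entries J_{(i,j),(k,l)} = δ_{ij}·δ_{kl}. Then α = d + 1. -/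
/-!
Take traces of both sides of the depolarizing identity. Since every `Sₘ` has unit Frobenius norm,
`tr C = ∑ₘ tₘ`, and the trace of `∑ₘ tₘ Sₘ = I` gives `∑ₘ tₘ = d`. The right-hand side has trace
`d²/α + (1 - 1/α)`, so `(d - 1) = (d - 1)(d + 1)/α`, and `d ≠ 1` forces `α = d + 1`.
-/

open Matrix

theorem eq_add_one_of_eq_inv_mul_sq_add_one_sub_inv {K : Type*} [Field K] {d a : K} (hd : d ≠ 1)
    (h : d = a⁻¹ * d ^ 2 + (1 - a⁻¹)) : a = d + 1 := by
  have hfactor : (d - 1) * 1 = (d - 1) * (a⁻¹ * (d + 1)) := by linear_combination h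
  have hinv : a⁻¹ = (d + 1)⁻¹ :=
    eq_inv_of_mul_eq_one_left (mul_left_cancel₀ (sub_ne_zero.mpr hd) hfactor).symm
  exact inv_inj.mp hinv

namespace Matrix

variable {ι n : Type*} [Fintype ι] [Fintype n]

theorem sum_eq_card_of_sum_smul_eq_one [DecidableEq n] {R : Type*} [CommSemiring R]
    {S : ι → Matrix n n R} {t : ι → R} (htr : ∀ m, (S m).trace = 1)
    (hres : ∑ m, t m • S m = 1) : ∑ m, t m = Fintype.card n := by
  simpa [trace_sum, htr] using congrArg trace hres

theorem trace_of_ite_mul_ite [DecidableEq n] {R : Type*} [Semiring R] :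
    (of fun p q : n × n => (if p.1 = p.2 then (1 : R) else 0) * (if q.1 = q.2 then 1 else 0)).trace
      = Fintype.card n := by
  simp [trace, Fintype.sum_prod_type]

theorem trace_of_sum_mul_conj_ofReal_mul (S : ι → Matrix n n ℂ) (t : ι → ℝ) :
    (of fun p q : n × n => ∑ m, S m p.1 p.2 * starRingEnd ℂ ((t m : ℂ) * S m q.1 q.2)).trace
      = ∑ m, ((t m * ∑ i, ∑ j, ‖S m i j‖ ^ 2 : ℝ) : ℂ) := by
  have hentry (m i j) : S m i j * starRingEnd ℂ ((t m : ℂ) * S m i j) = t m * ‖S m i j‖ ^ 2 := by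
    rw [map_mul, Complex.conj_ofReal, mul_left_comm, Complex.mul_conj']
  simp only [trace, diag, of_apply]
  rw [Finset.sum_comm]
  push_cast
  simp only [Fintype.sum_prod_type, hentry, Finset.mul_sum]

end Matrix

theorem pure_weight_morphophoric_alpha_general
    (d n : ℕ) (hd : 2 ≤ d)
    (S : Fin n → Matrix (Fin d) (Fin d) ℂ)
    (htr : ∀ m, (S m).trace = 1)
    (hfrob : ∀ m, ∑ i, ∑ j, ‖S m i j‖ ^ 2 = 1)
    (t : Fin n → ℝ) (hres : ∑ m, (t m : ℂ) • S m = 1)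
    (α : ℝ)
    (C : Matrix (Fin d × Fin d) (Fin d × Fin d) ℂ)
    (hC : C = Matrix.of fun p q =>
      ∑ m, S m p.1 p.2 * (starRingEnd ℂ) ((t m : ℂ) * S m q.1 q.2))
    (J : Matrix (Fin d × Fin d) (Fin d × Fin d) ℂ)
    (hJ : J = Matrix.of fun p q : Fin d × Fin d =>
      (if p.1 = p.2 then 1 else 0) * (if q.1 = q.2 then 1 else 0))
    (hdep : C = ((α : ℂ))⁻¹ • 1 + ((1 - α⁻¹ : ℝ) : ℂ) • ((d : ℂ)⁻¹ • J)) :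
    α = d + 1 := by
  have hweights : ∑ m, (t m : ℂ) = d := by
    simpa using sum_eq_card_of_sum_smul_eq_one htr hres
  have htrC : C.trace = d := by
    rw [hC, trace_of_sum_mul_conj_ofReal_mul, ← hweights]
    simp [hfrob]
  have htrJ : J.trace = d := by
    rw [hJ, trace_of_ite_mul_ite, Fintype.card_fin]
  have hscalar : (d : ℂ) = (α : ℂ)⁻¹ * d ^ 2 + (1 - (α : ℂ)⁻¹) := by
    have hd0 : (d : ℂ) ≠ 0 := by exact_mod_cast (by omega : d ≠ 0)
    have htrace := congrArg trace hdep
    rw [htrC, trace_add, trace_smul, trace_smul, trace_smul, trace_one, htrJ] at htrace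
    simpa [hd0, sq] using htrace
  exact_mod_cast eq_add_one_of_eq_inv_mul_sq_add_one_sub_inv
    (by exact_mod_cast (by omega : d ≠ 1)) hscalar

/-- For a pure weight-morphophoric reference device in complex
quantum theory (post-measurement states `Sₘ` of trace 1 and unit Frobenius norm,
effects `tₘ·Sₘ` resolving the identity), if the channel operator
`C_{(i,j),(k,l)} = ∑ₘ Sₘ[i,j]·conj(tₘ·Sₘ[k,l])` is depolarizing,
`C = (1/α)·I + (1 − 1/α)·(1/d)·J`, then `α = d + 1`. -/
theorem pure_weight_morphophoric_alpha
    (d n : ℕ) (hd : 2 ≤ d)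
    (S : Fin n → Matrix (Fin d) (Fin d) ℂ)
    (htr : ∀ m, (S m).trace = 1)
    (hfrob : ∀ m, ∑ i, ∑ j, ‖S m i j‖ ^ 2 = 1)
    (t : Fin n → ℝ) (hres : ∑ m, (t m : ℂ) • S m = 1)
    (α : ℝ) (hα : α ≠ 0)
    (C : Matrix (Fin d × Fin d) (Fin d × Fin d) ℂ)
    (hC : C = Matrix.of fun p q =>
      ∑ m, S m p.1 p.2 * (starRingEnd ℂ) ((t m : ℂ) * S m q.1 q.2))
    (J : Matrix (Fin d × Fin d) (Fin d × Fin d) ℂ)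
    (hJ : J = Matrix.of fun p q : Fin d × Fin d =>
      (if p.1 = p.2 then 1 else 0) * (if q.1 = q.2 then 1 else 0))
    (hdep : C = ((α : ℂ))⁻¹ • 1 + ((1 - α⁻¹ : ℝ) : ℂ) • ((d : ℂ)⁻¹ • J)) :
    α = d + 1 :=
  pure_weight_morphophoric_alpha_general d n hd S htr hfrob t hres α C hC J hJ hdep
end

section
/- Let d ≥ 1, let ψ₁, …, ψₙ ∈ ℂᵈ be unit vectors, set Sₘ = ψₘψₘ* (the d×d matrix with entries ψₘ(i)·conj(ψₘ(j))), and let t₁, …, tₙ be real numbers. Suppose the d²×d² matrix C with entries C_{(i,j),(k,l)} = ∑ₘ tₘ · Sₘ[i,j] · conj(Sₘ[k,l]) satisfies C = (1/(d+1))·(I_{d²} + J), where J_{(i,j),(k,l)} = δ_{ij}·δ_{kl}. Then, with weights wₘ = tₘ/d, the pure states form a weighted complex projective 2-design: ∑ₘ wₘ · (Sₘ ⊗ Sₘ) = (1/(d(d+1)))·(I_{d²} + SWAP), where ⊗ is the Kronecker product, (A ⊗ B)_{(i,j),(k,l)} = A[i,k]·B[j,l], and SWAP is the d²×d² matrix with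 entries SWAP_{(i,j),(k,l)} = δ_{il}·δ_{jk}. -/
open Matrix Kronecker

/-!
Up to the reindexing `(i, j), (k, l) ↦ (i, k), (l, j)` of entries, the channel operator
`C = ∑ₘ tₘ vec(Sₘ) vec(Sₘ)†` of Hermitian states is `∑ₘ tₘ (Sₘ ⊗ Sₘ)`, because
`Sₘ[i,k] · conj (Sₘ[l,j]) = Sₘ[i,k] · Sₘ[j,l]`. The same reindexing sends `I` to `SWAP`
and `J` to `I`, so applying it to `C = (I + J)/(d+1)` and dividing by `d` gives the
2-design equation.
-/

namespace Matrix

theorem isHermitian_vecMulVec_self_star {n α : Type*} [Mul α] [StarMul α] (a : n → α) :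
    (vecMulVec a (star a)).IsHermitian := by
  rw [IsHermitian, conjTranspose_vecMulVec, star_star]

variable {ι R : Type*} [Semiring R]

def reshuffle : Matrix (ι × ι) (ι × ι) R →ₗ[R] Matrix (ι × ι) (ι × ι) R where
  toFun M := of fun p q => M (p.1, q.1) (q.2, p.2)
  map_add' _ _ := rfl
  map_smul' _ _ := rfl

@[simp]
theorem reshuffle_apply (M : Matrix (ι × ι) (ι × ι) R) (i j k l : ι) :
    reshuffle M (i, j) (k, l) = M (i, k) (l, j) :=
  rfl

theorem reshuffle_one [DecidableEq ι] :
    reshuffle (1 : Matrix (ι × ι) (ι × ι) R) =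
      of fun p q => if p.1 = q.2 ∧ p.2 = q.1 then 1 else 0 := by
  ext ⟨i, j⟩ ⟨k, l⟩
  simp [one_apply, eq_comm (a := k)]

theorem reshuffle_vec_one_mul_vec_one [DecidableEq ι] :
    reshuffle (of fun p q : ι × ι =>
      (if p.1 = p.2 then (1 : R) else 0) * (if q.1 = q.2 then 1 else 0)) = 1 := by
  ext ⟨i, j⟩ ⟨k, l⟩
  simp only [reshuffle_apply, of_apply, one_apply, Prod.mk.injEq, ite_zero_mul_ite_zero, one_mul,
    eq_comm (a := l)]

theorem reshuffle_sum_mul_star_eq_sum_smul_kronecker {μ : Type*} [Fintype μ] [StarRing R]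
    (c : μ → R) (S : μ → Matrix ι ι R) (hS : ∀ m, (S m).IsHermitian) :
    reshuffle (of fun p q => ∑ m, c m * S m p.1 p.2 * star (S m q.1 q.2)) =
      ∑ m, c m • (S m ⊗ₖ S m) := by
  ext ⟨i, j⟩ ⟨k, l⟩
  simp only [reshuffle_apply, of_apply, sum_apply, smul_apply, kroneckerMap_apply, smul_eq_mul]
  refine Finset.sum_congr rfl fun m _ => ?_
  rw [← (hS m).apply j l, mul_assoc]

end Matrix

theorem depolarizing_gives_two_design_general
    (d n : ℕ)
    (ψ : Fin n → Fin d → ℂ)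
    (S : Fin n → Matrix (Fin d) (Fin d) ℂ)
    (hS : ∀ m, S m = Matrix.of fun i j => ψ m i * (starRingEnd ℂ) (ψ m j))
    (t : Fin n → ℝ)
    (C J SWAP : Matrix (Fin d × Fin d) (Fin d × Fin d) ℂ)
    (hC : C = Matrix.of fun p q =>
      ∑ m, (t m : ℂ) * S m p.1 p.2 * (starRingEnd ℂ) (S m q.1 q.2))
    (hJ : J = Matrix.of fun p q : Fin d × Fin d =>
      (if p.1 = p.2 then 1 else 0) * (if q.1 = q.2 then 1 else 0))
    (hSWAP : SWAP = Matrix.of fun p q : Fin d × Fin d =>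
      if p.1 = q.2 ∧ p.2 = q.1 then 1 else 0)
    (hdep : C = ((d : ℂ) + 1)⁻¹ • (1 + J)) :
    ∑ m, ((t m / d : ℝ) : ℂ) • (S m ⊗ₖ S m) =
      ((d : ℂ) * ((d : ℂ) + 1))⁻¹ • (1 + SWAP) := by
  have hherm : ∀ m, (S m).IsHermitian := fun m => by
    rw [hS m]
    exact isHermitian_vecMulVec_self_star (ψ m)
  have hC_reshuffle : reshuffle C = ∑ m, (t m : ℂ) • (S m ⊗ₖ S m) :=
    hC ▸ reshuffle_sum_mul_star_eq_sum_smul_kronecker _ S hherm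
  calc ∑ m, ((t m / d : ℝ) : ℂ) • (S m ⊗ₖ S m)
      = (d : ℂ)⁻¹ • reshuffle C := by
        rw [hC_reshuffle, Finset.smul_sum]
        refine Finset.sum_congr rfl fun m _ => ?_
        rw [smul_smul]
        push_cast
        rw [div_eq_inv_mul]
    _ = ((d : ℂ) * ((d : ℂ) + 1))⁻¹ • (1 + SWAP) := by
        rw [hdep, hJ, hSWAP, map_smul, map_add, reshuffle_one, reshuffle_vec_one_mul_vec_one,
          smul_smul, mul_inv, add_comm _ (1 : Matrix (Fin d × Fin d) (Fin d × Fin d) ℂ)]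

/-- If the channel operator of a pure reference device with
post-measurement states `Sₘ = ψₘψₘ*` and effects `tₘ·Sₘ` is depolarizing with
parameter `1/(d+1)`, i.e. `C = (1/(d+1))·(I + J)`, then with weights `wₘ = tₘ/d`
the states form a weighted complex projective 2-design:
`∑ₘ wₘ·(Sₘ ⊗ Sₘ) = (1/(d(d+1)))·(I + SWAP)`. -/
theorem depolarizing_gives_two_design
    (d n : ℕ) (hd : 1 ≤ d)
    (ψ : Fin n → Fin d → ℂ) (hunit : ∀ m, ∑ i, ‖ψ m i‖ ^ 2 = 1)
    (S : Fin n → Matrix (Fin d) (Fin d) ℂ)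
    (hS : ∀ m, S m = Matrix.of fun i j => ψ m i * (starRingEnd ℂ) (ψ m j))
    (t : Fin n → ℝ)
    (C J SWAP : Matrix (Fin d × Fin d) (Fin d × Fin d) ℂ)
    (hC : C = Matrix.of fun p q =>
      ∑ m, (t m : ℂ) * S m p.1 p.2 * (starRingEnd ℂ) (S m q.1 q.2))
    (hJ : J = Matrix.of fun p q : Fin d × Fin d =>
      (if p.1 = p.2 then 1 else 0) * (if q.1 = q.2 then 1 else 0))
    (hSWAP : SWAP = Matrix.of fun p q : Fin d × Fin d =>
      if p.1 = q.2 ∧ p.2 = q.1 then 1 else 0)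
    (hdep : C = ((d : ℂ) + 1)⁻¹ • (1 + J)) :
    ∑ m, ((t m / d : ℝ) : ℂ) • (S m ⊗ₖ S m) =
      ((d : ℂ) * ((d : ℂ) + 1))⁻¹ • (1 + SWAP) :=
  depolarizing_gives_two_design_general d n ψ S hS t C J SWAP hC hJ hSWAP hdep
end

section
/- Let w ∈ ℝⁿ with uᵀw = 1 (u ∈ ℝⁿ the all-ones vector), let A be an n×(r−1) real matrix with uᵀA = 0, let α ≠ 0 be real, and let X be an (r−1)×n real matrix with X·w = 0 and X·A = (1/α)·I_{r−1}. Set P = w·uᵀ + A·X. Then the natural Born matrix Φ = w·uᵀ + α²·A·X is a {1}-inverse of P: P·Φ·P = P. -/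
open Matrix

/-!
Write `P = W + M` with `W = w·uᵀ` and `M = A·X`. Then `W² = W` because `uᵀw = 1`,
`W·M = M·W = 0` because `uᵀA = 0` and `X·w = 0`, and `M² = α⁻¹·M` because `X·A = α⁻¹·I`.
For two such orthogonal elements, `(W + M)(W + α²M) = W + α·M` uses `M² = α⁻¹M` once,
and multiplying by `W + M` once more uses it again and returns `W + M`.
-/

section OrthogonalQuasiIdempotents

variable {K R : Type*} [Field K] [Ring R] [Algebra K R]

theorem add_mul_add_smul_mul_add_of_orthogonal {e m : R} {c : K} (hc : c ≠ 0)
    (hee : e * e = e) (hem : e * m = 0) (hme : m * e = 0) (hmm : m * m = c⁻¹ • m) :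
    (e + m) * (e + c ^ 2 • m) * (e + m) = e + m := by
  have hleft : (e + m) * (e + c ^ 2 • m) = e + c • m := by
    simp only [add_mul, mul_add, mul_smul_comm, hee, hem, hme, hmm, smul_smul, add_zero,
      zero_add]
    rw [sq, mul_assoc, mul_inv_cancel₀ hc, mul_one]
  rw [hleft]
  simp only [add_mul, mul_add, smul_mul_assoc, hee, hem, hme, hmm, smul_smul, smul_zero,
    add_zero, zero_add, mul_inv_cancel₀ hc, one_smul]

end OrthogonalQuasiIdempotents

section VecMulVecOne

variable {α ι κ : Type*} [CommSemiring α] [Fintype ι]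

theorem vecMulVec_one_mul_self {w : ι → α} (hw : ∑ i, w i = 1) :
    vecMulVec w (fun _ : ι => (1 : α)) * vecMulVec w (fun _ : ι => 1) =
      vecMulVec w (fun _ : ι => 1) := by
  have hmass : (fun _ : ι => (1 : α)) ⬝ᵥ w = 1 := by simp [dotProduct, hw]
  rw [vecMulVec_mul_vecMulVec, hmass, one_smul]

theorem vecMulVec_one_mul_eq_zero (w : ι → α) {A : Matrix ι κ α} (hA : ∀ j, ∑ i, A i j = 0) :
    vecMulVec w (fun _ : ι => (1 : α)) * A = 0 := by
  have hcol : (fun _ : ι => (1 : α)) ᵥ* A = 0 := funext fun j => by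
    simp [vecMul, dotProduct, hA]
  rw [vecMulVec_mul, hcol]
  ext
  simp [vecMulVec_apply]

theorem mul_vecMulVec_eq_zero {w : ι → α} {X : Matrix κ ι α} (hXw : X *ᵥ w = 0)
    (v : ι → α) : X * vecMulVec w v = 0 := by
  rw [mul_vecMulVec, hXw, zero_vecMulVec]

end VecMulVecOne

/-- For a depolarizing reference device in Bloch form (bias `w`,
effect block `A`, state block `X` with `X·w = 0`, `X·A = (1/α)·I`), the natural
Born matrix `Φ = w·uᵀ + α²·A·X` is a `{1}`-inverse of `P = w·uᵀ + A·X`. -/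
theorem natural_born_matrix_one_inverse
    (n r : ℕ)
    (w : Fin n → ℝ) (hw : ∑ i, w i = 1)
    (A : Matrix (Fin n) (Fin (r - 1)) ℝ) (hA : ∀ j, ∑ i, A i j = 0)
    (α : ℝ) (hα : α ≠ 0)
    (X : Matrix (Fin (r - 1)) (Fin n) ℝ)
    (hXw : X.mulVec w = 0) (hXA : X * A = α⁻¹ • 1)
    (P : Matrix (Fin n) (Fin n) ℝ)
    (hP : P = Matrix.vecMulVec w (fun _ => 1) + A * X)
    (Φ : Matrix (Fin n) (Fin n) ℝ)
    (hΦ : Φ = Matrix.vecMulVec w (fun _ => 1) + (α ^ 2) • (A * X)) :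
    P * Φ * P = P := by
  subst hP hΦ
  refine add_mul_add_smul_mul_add_of_orthogonal hα (vecMulVec_one_mul_self hw) ?_ ?_ ?_
  · rw [← Matrix.mul_assoc, vecMulVec_one_mul_eq_zero w hA, Matrix.zero_mul]
  · rw [Matrix.mul_assoc, mul_vecMulVec_eq_zero hXw, Matrix.mul_zero]
  · rw [Matrix.mul_assoc, ← Matrix.mul_assoc X, hXA, Matrix.smul_mul, Matrix.one_mul,
      Matrix.mul_smul]
end

section
/- Let w ∈ ℝⁿ with uᵀw = 1 (u ∈ ℝⁿ the all-ones vector), let A be an n×(r−1) real matrix with uᵀA = 0, let α ≠ 0 be real, and let X be an (r−1)×n real matrix with X·w = 0 and X·A = (1/α)·I_{r−1}. Then the natural Born matrix Φ = w·uᵀ + α²·A·X acts as a Protourgleichung: for every v ∈ ℝ^{r−1}, Φ·(w + A·v) = w + α·(A·v); equivalently, for every probability vector of the form p = w + A·v, Φ·p = α·p + (1−α)·w. -/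
/-! The rank-one part `w·uᵀ` of `Φ` sends `p = w + A·v` to `(uᵀp)·w = w`, because the columns
of `A` sum to zero; the part `α²·A·X` kills `w` and sends `A·v` to `α²·α⁻¹·A·v = α·A·v`. -/

open Matrix

namespace Matrix

variable {ι κ R : Type*} [Fintype ι] [Fintype κ] [CommSemiring R]

theorem one_dotProduct_mulVec_eq_zero {A : Matrix ι κ R} (hA : ∀ j, ∑ i, A i j = 0)
    (v : κ → R) : 1 ⬝ᵥ A *ᵥ v = 0 := by
  have hcol : 1 ᵥ* A = 0 := by
    ext j
    simpa [vecMul, dotProduct] using hA j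
  rw [dotProduct_mulVec, hcol, zero_dotProduct]

theorem vecMulVec_one_mulVec (w p : ι → R) : vecMulVec w 1 *ᵥ p = (1 ⬝ᵥ p) • w := by
  rw [vecMulVec_mulVec, op_smul_eq_smul]

theorem mul_mulVec_add_mulVec_eq_smul [DecidableEq κ] {A : Matrix ι κ R} {X : Matrix κ ι R}
    {w : ι → R} {c : R} (hXw : X *ᵥ w = 0) (hXA : X * A = c • 1) (v : κ → R) :
    (A * X) *ᵥ (w + A *ᵥ v) = c • A *ᵥ v := by
  rw [← mulVec_mulVec, mulVec_add, hXw, mulVec_mulVec, hXA, smul_mulVec, one_mulVec,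
    zero_add, mulVec_smul]

end Matrix

theorem natural_born_matrix_protourgleichung_general
    (n r : ℕ)
    (w : Fin n → ℝ) (hw : ∑ i, w i = 1)
    (A : Matrix (Fin n) (Fin (r - 1)) ℝ) (hA : ∀ j, ∑ i, A i j = 0)
    (α : ℝ)
    (X : Matrix (Fin (r - 1)) (Fin n) ℝ)
    (hXw : X.mulVec w = 0) (hXA : X * A = α⁻¹ • 1)
    (Φ : Matrix (Fin n) (Fin n) ℝ)
    (hΦ : Φ = Matrix.vecMulVec w (fun _ => 1) + (α ^ 2) • (A * X)) :
    ∀ v : Fin (r - 1) → ℝ,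
      Φ.mulVec (w + A.mulVec v) = w + α • A.mulVec v := by
  intro v
  have hp : 1 ⬝ᵥ (w + A *ᵥ v) = 1 := by
    rw [dotProduct_add, one_dotProduct, hw, one_dotProduct_mulVec_eq_zero hA, add_zero]
  rw [hΦ, add_mulVec, ← Pi.one_def, vecMulVec_one_mulVec, hp, one_smul, smul_mulVec,
    mul_mulVec_add_mulVec_eq_smul hXw hXA, smul_smul, sq, mul_self_mul_inv]

/-- The natural Born matrix `Φ = w·uᵀ + α²·A·X` acts as a
Protourgleichung: for every `v`, `Φ·(w + A·v) = w + α·(A·v)`, i.e. on probability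
vectors `p = w + A·v` it acts as `p ↦ α·p + (1−α)·w`. -/
theorem natural_born_matrix_protourgleichung
    (n r : ℕ)
    (w : Fin n → ℝ) (hw : ∑ i, w i = 1)
    (A : Matrix (Fin n) (Fin (r - 1)) ℝ) (hA : ∀ j, ∑ i, A i j = 0)
    (α : ℝ) (hα : α ≠ 0)
    (X : Matrix (Fin (r - 1)) (Fin n) ℝ)
    (hXw : X.mulVec w = 0) (hXA : X * A = α⁻¹ • 1)
    (Φ : Matrix (Fin n) (Fin n) ℝ)
    (hΦ : Φ = Matrix.vecMulVec w (fun _ => 1) + (α ^ 2) • (A * X)) :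
    ∀ v : Fin (r - 1) → ℝ,
      Φ.mulVec (w + A.mulVec v) = w + α • A.mulVec v :=
  natural_born_matrix_protourgleichung_general n r w hw A hA α X hXw hXA Φ hΦ
end

section
/- Let n ≥ r ≥ 2, let u ∈ ℝⁿ be the all-ones vector, let A be an n×(r−1) real matrix of rank r−1 with uᵀA = 0, let α ≠ 0 be real, and let X be an (r−1)×n real matrix of rank r−1 with X·u = 0 and X·A = (1/α)·I_{r−1}. Set P = (1/n)·u·uᵀ + A·X and Φ* = I_n + ((α−1)/α)·Xᵀ·(X·Xᵀ)⁻¹·(Aᵀ·A)⁻¹·Aᵀ. Then: (1) P·Φ*·P = P; and (2) Φ* is the unique minimizer of the Frobenius norm ‖I_n − Φ‖ over all n×n real matrices Φ satisfying P·Φ·P = P, i.e. for every Ψ with P·Ψ·P = P and Ψ ≠ Φ*, one has ∑_{i,j} (I − Φ*)ᵢⱼ² < ∑_{i,j} (I − Ψ)ᵢⱼ². -/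
/-!
Since `X * A = α⁻¹ • 1` and `Aᵀ * Xᵀ = α⁻¹ • 1`, both `A` and `Xᵀ` are injective, so
`Aᵀ * A` and `X * Xᵀ` are invertible. Write `P = J + A * X` with `J = (1/n) u uᵀ` the orthogonal
projection onto the constants. Then `P * Xᵀ * (X * Xᵀ)⁻¹ = A` and `(Aᵀ * A)⁻¹ * Aᵀ * P = X`,
whence `P * Φ* * P = P`. Moreover `Pᵀ * Xᵀ = α⁻¹ • Xᵀ` and `Aᵀ * Pᵀ = α⁻¹ • Aᵀ`, so
`1 - Φ* = Pᵀ * Y * Pᵀ` for some `Y`. If `P * Ψ * P = P`, then `E = Φ* - Ψ` satisfies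
`P * E * P = 0`, hence `tr ((Pᵀ * Y * Pᵀ)ᵀ * E) = tr (P * E * P * Yᵀ) = 0`: `E` is
Frobenius-orthogonal to `1 - Φ*`, and Pythagoras gives `‖1 - Ψ‖² = ‖1 - Φ*‖² + ‖E‖²`.
-/

open Matrix

namespace Matrix

variable {K : Type*} [Field K] {m k : Type*}

theorem isSymm_smul_vecMulVec_one (c : K) :
    (c • vecMulVec (fun _ : m => (1 : K)) (fun _ : m => 1)).IsSymm := by
  simp [IsSymm, transpose_smul]

variable [Fintype m]

theorem smul_vecMulVec_one_mul_eq_zero (c : K) {A : Matrix m k K} (hA : ∀ j, ∑ i, A i j = 0) :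
    c • vecMulVec (fun _ : m => (1 : K)) (fun _ : m => 1) * A = 0 := by
  have h1A : (fun _ => 1) ᵥ* A = 0 := funext fun j => by simpa [vecMul, dotProduct] using hA j
  rw [Matrix.smul_mul, vecMulVec_mul, h1A]
  ext
  simp [vecMulVec_apply]

theorem mul_smul_vecMulVec_one_eq_zero (c : K) {X : Matrix k m K}
    (hX : X *ᵥ (fun _ => (1 : K)) = 0) :
    X * c • vecMulVec (fun _ : m => (1 : K)) (fun _ : m => 1) = 0 := by
  rw [Matrix.mul_smul, mul_vecMulVec, hX, zero_vecMulVec, smul_zero]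

theorem isIdempotentElem_inv_card_smul_vecMulVec_one :
    IsIdempotentElem
      ((Fintype.card m : K)⁻¹ • vecMulVec (fun _ : m => (1 : K)) (fun _ : m => 1)) := by
  ext i j
  simp only [smul_apply, mul_apply, vecMulVec_apply, mul_one, Finset.sum_const,
    Finset.card_univ, nsmul_eq_mul, smul_eq_mul]
  grind

variable [Fintype k]

theorem sum_sum_mul_eq_trace_transpose_mul (M N : Matrix m k K) :
    ∑ i, ∑ j, M i j * N i j = (Mᵀ * N).trace := by
  simp only [trace, diag, mul_apply, transpose_apply]
  exact Finset.sum_comm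

theorem trace_transpose_sandwich_mul_eq_zero {P : Matrix m k K} {E : Matrix k m K}
    (hE : P * E * P = 0) (Y : Matrix m k K) : ((Pᵀ * Y * Pᵀ)ᵀ * E).trace = 0 := by
  calc ((Pᵀ * Y * Pᵀ)ᵀ * E).trace = (P * Yᵀ * (P * E)).trace := by
        simp only [transpose_mul, transpose_transpose, Matrix.mul_assoc]
    _ = (P * E * P * Yᵀ).trace := by rw [trace_mul_comm, ← Matrix.mul_assoc]
    _ = 0 := by rw [hE, Matrix.zero_mul, trace_zero]

theorem mulVec_injective_of_mul_eq_smul_one [DecidableEq k] {X : Matrix k m K}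
    {A : Matrix m k K} {c : K} (hc : c ≠ 0) (h : X * A = c • 1) :
    Function.Injective A.mulVec := by
  refine Function.Injective.of_comp (f := X.mulVec) ?_
  have hcomp : X.mulVec ∘ A.mulVec = fun v => c • v := funext fun v => by
    simp [mulVec_mulVec, h, smul_mulVec]
  rw [hcomp]
  exact smul_right_injective _ hc

section Ordered

variable [LinearOrder K] [IsStrictOrderedRing K]

theorem isUnit_transpose_mul_self_of_injective [DecidableEq k] {A : Matrix m k K}
    (hA : Function.Injective A.mulVec) : IsUnit (Aᵀ * A) := by
  rwa [← mulVec_injective_iff_isUnit, ← coe_mulVecLin, ← LinearMap.ker_eq_bot,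
    ker_mulVecLin_transpose_mul_self, LinearMap.ker_eq_bot]

theorem sum_sum_sq_lt_sum_sum_sq_add {D E : Matrix m k K}
    (horth : ∑ i, ∑ j, D i j * E i j = 0) (hE : E ≠ 0) :
    ∑ i, ∑ j, D i j ^ 2 < ∑ i, ∑ j, (D + E) i j ^ 2 := by
  obtain ⟨i, j, hij⟩ : ∃ i j, E i j ≠ 0 := by
    by_contra! h
    exact hE (Matrix.ext h)
  have hpos : 0 < ∑ i, ∑ j, E i j ^ 2 :=
    Finset.sum_pos' (fun i _ => Finset.sum_nonneg fun j _ => sq_nonneg _)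
      ⟨i, Finset.mem_univ i,
        Finset.sum_pos' (fun j _ => sq_nonneg _) ⟨j, Finset.mem_univ j, by positivity⟩⟩
  have hexpand : ∑ i, ∑ j, (D + E) i j ^ 2
      = ∑ i, ∑ j, D i j ^ 2 + 2 * ∑ i, ∑ j, D i j * E i j + ∑ i, ∑ j, E i j ^ 2 := by
    simp only [add_apply, add_sq, Finset.sum_add_distrib, Finset.mul_sum, mul_assoc]
  linarith

theorem sum_sum_sq_one_sub_lt_of_one_sub_eq_sandwich [DecidableEq m] {P Φ Ψ Y : Matrix m m K}
    (hΦ : P * Φ * P = P) (hY : 1 - Φ = Pᵀ * Y * Pᵀ) (hΨ : P * Ψ * P = P) (hne : Ψ ≠ Φ) :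
    ∑ i, ∑ j, (1 - Φ) i j ^ 2 < ∑ i, ∑ j, (1 - Ψ) i j ^ 2 := by
  have hPEP : P * (Φ - Ψ) * P = 0 := by rw [Matrix.mul_sub, Matrix.sub_mul, hΦ, hΨ, sub_self]
  have horth : ∑ i, ∑ j, (1 - Φ) i j * (Φ - Ψ) i j = 0 := by
    rw [sum_sum_mul_eq_trace_transpose_mul, hY, trace_transpose_sandwich_mul_eq_zero hPEP]
  simpa using sum_sum_sq_lt_sum_sum_sq_add horth (sub_ne_zero.mpr hne.symm)

end Ordered

end Matrix

namespace BlochForm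

variable {K : Type*} [Field K] {m k : Type*} [Fintype m] [Fintype k] [DecidableEq k]
  {J P : Matrix m m K} {A : Matrix m k K} {X : Matrix k m K} {α : K}

noncomputable def minimalBornMatrix [DecidableEq m] (α : K) (A : Matrix m k K)
    (X : Matrix k m K) : Matrix m m K :=
  1 + ((α - 1) / α) • (Xᵀ * (X * Xᵀ)⁻¹ * (Aᵀ * A)⁻¹ * Aᵀ)

theorem mul_effect_eq_inv_smul (hP : P = J + A * X) (hJA : J * A = 0)
    (hXA : X * A = α⁻¹ • 1) : P * A = α⁻¹ • A := by
  rw [hP, Matrix.add_mul, hJA, zero_add, Matrix.mul_assoc, hXA, Matrix.mul_smul, Matrix.mul_one]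

theorem state_mul_eq_inv_smul (hP : P = J + A * X) (hXJ : X * J = 0)
    (hXA : X * A = α⁻¹ • 1) : X * P = α⁻¹ • X := by
  rw [hP, Matrix.mul_add, hXJ, zero_add, ← Matrix.mul_assoc, hXA, Matrix.smul_mul, Matrix.one_mul]

theorem mul_transpose_mul_inv_eq (hP : P = J + A * X) (hJ : J.IsSymm) (hXJ : X * J = 0)
    (hX : IsUnit (X * Xᵀ)) : P * Xᵀ * (X * Xᵀ)⁻¹ = A := by
  have hJX : J * Xᵀ = 0 := by rw [← hJ.eq, ← transpose_mul, hXJ, transpose_zero]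
  rw [hP, Matrix.add_mul, hJX, zero_add, Matrix.mul_assoc A,
    mul_nonsing_inv_cancel_right _ _ ((isUnit_iff_isUnit_det _).mp hX)]

theorem inv_mul_transpose_mul_eq (hP : P = J + A * X) (hJ : J.IsSymm) (hJA : J * A = 0)
    (hA : IsUnit (Aᵀ * A)) : (Aᵀ * A)⁻¹ * Aᵀ * P = X := by
  have hAJ : Aᵀ * J = 0 := by rw [← hJ.eq, ← transpose_mul, hJA, transpose_zero]
  rw [hP, Matrix.mul_add, Matrix.mul_assoc _ Aᵀ, hAJ, Matrix.mul_zero, zero_add,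
    Matrix.mul_assoc, ← Matrix.mul_assoc Aᵀ,
    nonsing_inv_mul_cancel_left _ _ ((isUnit_iff_isUnit_det _).mp hA)]

theorem mul_self_eq (hP : P = J + A * X) (hJJ : IsIdempotentElem J) (hJA : J * A = 0)
    (hXJ : X * J = 0) (hXA : X * A = α⁻¹ • 1) : P * P = J + α⁻¹ • (A * X) := by
  calc P * P = P * J + P * A * X := by rw [Matrix.mul_assoc P, ← Matrix.mul_add, ← hP]
    _ = J + α⁻¹ • (A * X) := by
      rw [mul_effect_eq_inv_smul hP hJA hXA, hP, Matrix.add_mul, Matrix.mul_assoc A, hXJ,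
        Matrix.mul_zero, add_zero, hJJ.eq, Matrix.smul_mul]

theorem mul_minimalBornMatrix_mul [DecidableEq m] (hP : P = J + A * X) (hJ : J.IsSymm)
    (hJJ : IsIdempotentElem J) (hJA : J * A = 0) (hXJ : X * J = 0) (hXA : X * A = α⁻¹ • 1)
    (hα : α ≠ 0) (hA : IsUnit (Aᵀ * A)) (hX : IsUnit (X * Xᵀ)) :
    P * minimalBornMatrix α A X * P = P := by
  have hsandwich : P * (Xᵀ * (X * Xᵀ)⁻¹ * (Aᵀ * A)⁻¹ * Aᵀ) * P = A * X := by
    simp only [← Matrix.mul_assoc]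
    rw [mul_transpose_mul_inv_eq hP hJ hXJ hX]
    simp only [Matrix.mul_assoc]
    rw [← Matrix.mul_assoc (Aᵀ * A)⁻¹, inv_mul_transpose_mul_eq hP hJ hJA hA]
  calc P * minimalBornMatrix α A X * P
      = P * P + ((α - 1) / α) • (P * (Xᵀ * (X * Xᵀ)⁻¹ * (Aᵀ * A)⁻¹ * Aᵀ) * P) := by
        rw [minimalBornMatrix, Matrix.mul_add, Matrix.mul_one, Matrix.add_mul, Matrix.mul_smul,
          Matrix.smul_mul]
    _ = J + (α⁻¹ + (α - 1) / α) • (A * X) := by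
        rw [mul_self_eq hP hJJ hJA hXJ hXA, hsandwich, add_assoc, add_smul]
    _ = P := by rw [show α⁻¹ + (α - 1) / α = 1 by field_simp; ring, one_smul, hP]

theorem exists_one_sub_minimalBornMatrix_eq [DecidableEq m] (hP : P = J + A * X)
    (hJA : J * A = 0) (hXJ : X * J = 0) (hXA : X * A = α⁻¹ • 1) (hα : α ≠ 0) :
    ∃ Y, 1 - minimalBornMatrix α A X = Pᵀ * Y * Pᵀ := by
  have hPX : Pᵀ * Xᵀ = α⁻¹ • Xᵀ := by
    rw [← transpose_mul, state_mul_eq_inv_smul hP hXJ hXA, transpose_smul]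
  have hAP : Aᵀ * Pᵀ = α⁻¹ • Aᵀ := by
    rw [← transpose_mul, mul_effect_eq_inv_smul hP hJA hXA, transpose_smul]
  refine ⟨(-((α - 1) / α) * α ^ 2) • (Xᵀ * (X * Xᵀ)⁻¹ * (Aᵀ * A)⁻¹ * Aᵀ), ?_⟩
  rw [minimalBornMatrix, sub_add_cancel_left, Matrix.mul_smul, Matrix.smul_mul]
  simp only [← Matrix.mul_assoc, hPX]
  rw [Matrix.mul_assoc _ Aᵀ, hAP]
  simp only [Matrix.smul_mul, Matrix.mul_smul, smul_smul, ← neg_smul]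
  congr 1
  field_simp

end BlochForm

open BlochForm

theorem frobenius_minimal_born_matrix_general
    (n r : ℕ)
    (A : Matrix (Fin n) (Fin (r - 1)) ℝ)
    (hA : ∀ j, ∑ i, A i j = 0)
    (α : ℝ) (hα : α ≠ 0)
    (X : Matrix (Fin (r - 1)) (Fin n) ℝ)
    (hXu : X.mulVec (fun _ => 1) = 0) (hXA : X * A = α⁻¹ • 1)
    (P : Matrix (Fin n) (Fin n) ℝ)
    (hP : P = (n : ℝ)⁻¹ • Matrix.vecMulVec (fun _ => 1) (fun _ => 1) + A * X)
    (Φ : Matrix (Fin n) (Fin n) ℝ)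
    (hΦ : Φ = 1 + ((α - 1) / α) • (Xᵀ * (X * Xᵀ)⁻¹ * (Aᵀ * A)⁻¹ * Aᵀ)) :
    P * Φ * P = P ∧
    ∀ Ψ : Matrix (Fin n) (Fin n) ℝ, P * Ψ * P = P → Ψ ≠ Φ →
      ∑ i, ∑ j, ((1 - Φ) i j) ^ 2 < ∑ i, ∑ j, ((1 - Ψ) i j) ^ 2 := by
  subst hΦ
  have hJA := smul_vecMulVec_one_mul_eq_zero (n : ℝ)⁻¹ hA
  have hXJ := mul_smul_vecMulVec_one_eq_zero (n : ℝ)⁻¹ hXu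
  have hJJ := isIdempotentElem_inv_card_smul_vecMulVec_one (K := ℝ) (m := Fin n)
  rw [Fintype.card_fin] at hJJ
  have hAA : IsUnit (Aᵀ * A) := isUnit_transpose_mul_self_of_injective
    (mulVec_injective_of_mul_eq_smul_one (inv_ne_zero hα) hXA)
  have hXX : IsUnit (X * Xᵀ) := by
    have hXtA : Aᵀ * Xᵀ = α⁻¹ • 1 := by rw [← transpose_mul, hXA, transpose_smul, transpose_one]
    simpa using isUnit_transpose_mul_self_of_injective
      (mulVec_injective_of_mul_eq_smul_one (inv_ne_zero hα) hXtA)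
  have hΦP :=
    mul_minimalBornMatrix_mul hP (isSymm_smul_vecMulVec_one _) hJJ hJA hXJ hXA hα hAA hXX
  obtain ⟨Y, hY⟩ := exists_one_sub_minimalBornMatrix_eq hP hJA hXJ hXA hα
  exact ⟨hΦP, fun Ψ hΨ hne => sum_sum_sq_one_sub_lt_of_one_sub_eq_sandwich hΦP hY hΨ hne⟩

/-- For an unbiased depolarizing reference device with
`P = (1/n)·u·uᵀ + A·X`, the matrix
`Φ* = I + ((α−1)/α)·Xᵀ·(XXᵀ)⁻¹·(AᵀA)⁻¹·Aᵀ` satisfies `P·Φ*·P = P` and is the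
unique minimizer of the Frobenius norm `‖I − Φ‖` over all `{1}`-inverses of `P`. -/
theorem frobenius_minimal_born_matrix
    (n r : ℕ) (hr : 2 ≤ r) (hnr : r ≤ n)
    (A : Matrix (Fin n) (Fin (r - 1)) ℝ) (hArank : A.rank = r - 1)
    (hA : ∀ j, ∑ i, A i j = 0)
    (α : ℝ) (hα : α ≠ 0)
    (X : Matrix (Fin (r - 1)) (Fin n) ℝ) (hXrank : X.rank = r - 1)
    (hXu : X.mulVec (fun _ => 1) = 0) (hXA : X * A = α⁻¹ • 1)
    (P : Matrix (Fin n) (Fin n) ℝ)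
    (hP : P = (n : ℝ)⁻¹ • Matrix.vecMulVec (fun _ => 1) (fun _ => 1) + A * X)
    (Φ : Matrix (Fin n) (Fin n) ℝ)
    (hΦ : Φ = 1 + ((α - 1) / α) • (Xᵀ * (X * Xᵀ)⁻¹ * (Aᵀ * A)⁻¹ * Aᵀ)) :
    P * Φ * P = P ∧
    ∀ Ψ : Matrix (Fin n) (Fin n) ℝ, P * Ψ * P = P → Ψ ≠ Φ →
      ∑ i, ∑ j, ((1 - Φ) i j) ^ 2 < ∑ i, ∑ j, ((1 - Ψ) i j) ^ 2 :=
  frobenius_minimal_born_matrix_general n r A hA α hα X hXu hXA P hP Φ hΦ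
end

section
/- Let n ≥ r ≥ 2, let u ∈ ℝⁿ be the all-ones vector, let A be an n×(r−1) real matrix of rank r−1 with uᵀA = 0, let α ≠ 0 be real, and let X be an (r−1)×n real matrix of rank r−1 with X·u = 0 and X·A = (1/α)·I_{r−1}. Then the matrix Φ* = I_n + ((α−1)/α)·Xᵀ·(X·Xᵀ)⁻¹·(Aᵀ·A)⁻¹·Aᵀ acts on reference probability vectors as Φ*·((1/n)·u + A·v) = (1/n)·u + (A + ((α−1)/α)·Xᵀ·(X·Xᵀ)⁻¹)·v for every v ∈ ℝ^{r−1}. In particular, Φ*·P(E) is in general not of the form α·P(E) + (1−α)·(1/n)u, i.e. the Frobenius-minimal Born matrix does not act as a Protourgleichung unless A + ((α−1)/α)Xᵀ(XXᵀ)⁻¹ = αA. -/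
/-!
Write `Φ* = I + c • B (AᵀA)⁻¹ Aᵀ` with `B = Xᵀ (XXᵀ)⁻¹`. Since `uᵀA = 0`, the correction term
kills `u`; since `A` has full column rank, `AᵀA` is invertible, so the correction term sends
`A v` to `B v`.
-/

open Matrix

namespace Matrix

variable {m n R : Type*} [Fintype m]

theorem isUnit_of_rank_eq_card [Fintype n] [DecidableEq n] [Field R] {B : Matrix n n R}
    (h : B.rank = Fintype.card n) : IsUnit B := by
  rw [← mulVec_surjective_iff_isUnit, ← coe_mulVecLin, ← LinearMap.range_eq_top]
  exact Submodule.eq_top_of_finrank_eq (by rwa [Module.finrank_fintype_fun_eq_card])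

theorem isUnit_transpose_mul_self_of_rank_eq_card [Fintype n] [DecidableEq n] [Field R]
    [LinearOrder R] [IsStrictOrderedRing R] {A : Matrix m n R} (h : A.rank = Fintype.card n) :
    IsUnit (Aᵀ * A) :=
  isUnit_of_rank_eq_card (by rw [rank_transpose_mul_self, h])

theorem transpose_mulVec_one_eq_zero [CommRing R] {A : Matrix m n R} (h : ∀ j, ∑ i, A i j = 0) :
    Aᵀ *ᵥ 1 = 0 := by
  ext j
  simpa [mulVec, dotProduct] using h j

theorem mul_gram_inv_mul_transpose_mulVec [Fintype n] [DecidableEq n] [CommRing R]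
    {A : Matrix m n R} (hA : IsUnit (Aᵀ * A)) {u : m → R} (hAu : Aᵀ *ᵥ u = 0)
    {k : Type*} (B : Matrix k n R) (s : R) (v : n → R) :
    (B * (Aᵀ * A)⁻¹ * Aᵀ) *ᵥ (s • u + A *ᵥ v) = B *ᵥ v := by
  have hcancel : (B * (Aᵀ * A)⁻¹ * Aᵀ) * A = B := by
    rw [Matrix.mul_assoc, Matrix.mul_assoc, nonsing_inv_mul _ ((isUnit_iff_isUnit_det _).mp hA),
      Matrix.mul_one]
  rw [mulVec_add, mulVec_smul, ← mulVec_mulVec, hAu, mulVec_zero, smul_zero, zero_add,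
    mulVec_mulVec, hcancel]

theorem one_add_smul_mul_gram_inv_mul_transpose_mulVec [Fintype n] [DecidableEq n] [CommRing R]
    [DecidableEq m] {A : Matrix m n R} (hA : IsUnit (Aᵀ * A)) {u : m → R} (hAu : Aᵀ *ᵥ u = 0)
    (B : Matrix m n R) (c s : R) (v : n → R) :
    (1 + c • (B * (Aᵀ * A)⁻¹ * Aᵀ)) *ᵥ (s • u + A *ᵥ v) = s • u + (A + c • B) *ᵥ v := by
  rw [add_mulVec, one_mulVec, smul_mulVec, mul_gram_inv_mul_transpose_mulVec hA hAu,
    add_mulVec, smul_mulVec, add_assoc]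

end Matrix

theorem frobenius_minimal_born_matrix_action_general
    (n r : ℕ)
    (u : Fin n → ℝ) (hu : u = fun _ => 1)
    (A : Matrix (Fin n) (Fin (r - 1)) ℝ) (hArank : A.rank = r - 1)
    (hA : ∀ j, ∑ i, A i j = 0)
    (α : ℝ)
    (X : Matrix (Fin (r - 1)) (Fin n) ℝ)
    (Φ : Matrix (Fin n) (Fin n) ℝ)
    (hΦ : Φ = 1 + ((α - 1) / α) • (Xᵀ * (X * Xᵀ)⁻¹ * (Aᵀ * A)⁻¹ * Aᵀ)) :
    ∀ v : Fin (r - 1) → ℝ,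
      Φ.mulVec ((n : ℝ)⁻¹ • u + A.mulVec v) =
        (n : ℝ)⁻¹ • u + (A + ((α - 1) / α) • (Xᵀ * (X * Xᵀ)⁻¹)).mulVec v := by
  intro v
  have hGram : IsUnit (Aᵀ * A) :=
    isUnit_transpose_mul_self_of_rank_eq_card (by rw [hArank, Fintype.card_fin])
  subst hu hΦ
  exact one_add_smul_mul_gram_inv_mul_transpose_mulVec hGram (transpose_mulVec_one_eq_zero hA)
    _ _ _ v

/-- The Frobenius-minimal Born matrix
`Φ* = I + ((α−1)/α)·Xᵀ·(XXᵀ)⁻¹·(AᵀA)⁻¹·Aᵀ` acts on reference probability vectors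
`(1/n)·u + A·v` by `Φ*·((1/n)·u + A·v) = (1/n)·u + (A + ((α−1)/α)·Xᵀ·(XXᵀ)⁻¹)·v`,
which is not of Protourgleichung form unless `A + ((α−1)/α)·Xᵀ·(XXᵀ)⁻¹ = α·A`. -/
theorem frobenius_minimal_born_matrix_action
    (n r : ℕ) (hr : 2 ≤ r) (hnr : r ≤ n)
    (u : Fin n → ℝ) (hu : u = fun _ => 1)
    (A : Matrix (Fin n) (Fin (r - 1)) ℝ) (hArank : A.rank = r - 1)
    (hA : ∀ j, ∑ i, A i j = 0)
    (α : ℝ) (hα : α ≠ 0)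
    (X : Matrix (Fin (r - 1)) (Fin n) ℝ) (hXrank : X.rank = r - 1)
    (hXu : X.mulVec u = 0) (hXA : X * A = α⁻¹ • 1)
    (Φ : Matrix (Fin n) (Fin n) ℝ)
    (hΦ : Φ = 1 + ((α - 1) / α) • (Xᵀ * (X * Xᵀ)⁻¹ * (Aᵀ * A)⁻¹ * Aᵀ)) :
    ∀ v : Fin (r - 1) → ℝ,
      Φ.mulVec ((n : ℝ)⁻¹ • u + A.mulVec v) =
        (n : ℝ)⁻¹ • u + (A + ((α - 1) / α) • (Xᵀ * (X * Xᵀ)⁻¹)).mulVec v :=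
  frobenius_minimal_born_matrix_action_general n r u hu A hArank hA α X Φ hΦ
end

section
/- Let w ∈ ℝⁿ with uᵀw = 1 (u ∈ ℝⁿ the all-ones vector), let A be an n×(r−1) real matrix with uᵀA = 0, let α ≠ 0 be real, and let X be an (r−1)×n real matrix with X·w = 0 and X·A = (1/α)·I_{r−1}. Set P = w·uᵀ + A·X. Then the simple Born matrix Φ = I_n + α(α−1)·A·X is a {1}-inverse of P (P·Φ·P = P), and it acts as a Protourgleichung: Φ·(w + A·v) = w + α·(A·v) for every v ∈ ℝ^{r−1}. -/
open Matrix

/-!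
With `W = w uᵀ` and `M = A X`, the hypotheses make `W` and `α M` orthogonal idempotents
(`W² = W`, `WM = MW = 0`, `M² = α⁻¹ M`), so that `P = W + M` and `P Φ = W + α M`, whence
`P Φ P = W + M = P`. For the second claim, `w` lies in the kernel of `M` and `A v` in its
`α⁻¹`-eigenspace, on which `Φ` acts as `1` and as `1 + α (α - 1) α⁻¹ = α` respectively.
-/

theorem add_mul_one_add_smul_mul_add_eq_self {K S : Type*} [Field K] [Ring S] [Algebra K S]
    {W M : S} {α : K} (hα : α ≠ 0) (hWW : W * W = W) (hWM : W * M = 0) (hMW : M * W = 0)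
    (hMM : M * M = α⁻¹ • M) :
    (W + M) * (1 + (α * (α - 1)) • M) * (W + M) = W + M := by
  have hPΦ : (W + M) * (1 + (α * (α - 1)) • M) = W + α • M := by
    have hc : α * (α - 1) * α⁻¹ = α - 1 := by field_simp
    rw [mul_add, mul_one, add_mul, mul_smul_comm, mul_smul_comm, hWM, hMM, smul_zero, smul_smul,
      hc]
    module
  rw [hPΦ, add_mul, mul_add, mul_add, smul_mul_assoc, smul_mul_assoc, hWW, hWM, hMW, hMM,
    smul_smul, mul_inv_cancel₀ hα, one_smul, smul_zero, add_zero, zero_add]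

namespace Matrix

variable {l m n R : Type*} [Fintype m] [CommRing R]

theorem vecMulVec_mul_vecMulVec_self {w u : m → R} (huw : u ⬝ᵥ w = 1) :
    vecMulVec w u * vecMulVec w u = vecMulVec w u := by
  rw [vecMulVec_mul_vecMulVec, huw, one_smul]

variable [Fintype n]

theorem vecMulVec_mul_mul_eq_zero {w u : m → R} {A : Matrix m n R} (huA : u ᵥ* A = 0)
    (X : Matrix n l R) : vecMulVec w u * (A * X) = 0 := by
  have hWA : vecMulVec w u * A = 0 := by
    rw [vecMulVec_mul, huA]
    ext
    simp [vecMulVec_apply]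
  rw [← Matrix.mul_assoc, hWA, Matrix.zero_mul]

theorem mul_mul_vecMulVec_eq_zero {X : Matrix n m R} {w : m → R} (hXw : X *ᵥ w = 0)
    (A : Matrix l n R) (u : m → R) : A * X * vecMulVec w u = 0 := by
  rw [Matrix.mul_assoc, mul_vecMulVec, hXw, zero_vecMulVec, Matrix.mul_zero]

theorem mul_mul_self_of_mul_eq_smul_one [DecidableEq n] {A : Matrix m n R} {X : Matrix n m R}
    {c : R} (hXA : X * A = c • 1) : A * X * (A * X) = c • (A * X) := by
  rw [Matrix.mul_assoc, ← Matrix.mul_assoc X, hXA, Matrix.smul_mul, Matrix.one_mul,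
    Matrix.mul_smul]

theorem mul_mulVec_mulVec_of_mul_eq_smul_one [DecidableEq n] {A : Matrix m n R}
    {X : Matrix n m R} {c : R} (hXA : X * A = c • 1) (v : n → R) :
    (A * X) *ᵥ (A *ᵥ v) = c • (A *ᵥ v) := by
  rw [mulVec_mulVec, Matrix.mul_assoc, hXA, Matrix.mul_smul, Matrix.mul_one, smul_mulVec]

theorem one_add_smul_mulVec_of_mulVec_eq_smul [DecidableEq m] {M : Matrix m m R} {x : m → R}
    {μ : R} (c : R) (hMx : M *ᵥ x = μ • x) :
    (1 + c • M) *ᵥ x = (1 + c * μ) • x := by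
  rw [add_mulVec, one_mulVec, smul_mulVec, hMx, smul_smul, add_smul, one_smul]

end Matrix

/-- For a (possibly biased) depolarizing reference device with
`P = w·uᵀ + A·X`, the simple Born matrix `Φ = I + α(α−1)·A·X` is a `{1}`-inverse
of `P` and acts as a Protourgleichung: `Φ·(w + A·v) = w + α·(A·v)`. -/
theorem simple_born_matrix
    (n r : ℕ)
    (w : Fin n → ℝ) (hw : ∑ i, w i = 1)
    (A : Matrix (Fin n) (Fin (r - 1)) ℝ) (hA : ∀ j, ∑ i, A i j = 0)
    (α : ℝ) (hα : α ≠ 0)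
    (X : Matrix (Fin (r - 1)) (Fin n) ℝ)
    (hXw : X.mulVec w = 0) (hXA : X * A = α⁻¹ • 1)
    (P : Matrix (Fin n) (Fin n) ℝ)
    (hP : P = Matrix.vecMulVec w (fun _ => 1) + A * X)
    (Φ : Matrix (Fin n) (Fin n) ℝ)
    (hΦ : Φ = 1 + (α * (α - 1)) • (A * X)) :
    P * Φ * P = P ∧
    ∀ v : Fin (r - 1) → ℝ,
      Φ.mulVec (w + A.mulVec v) = w + α • A.mulVec v := by
  have huw : (fun _ => 1) ⬝ᵥ w = 1 := (one_dotProduct w).trans hw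
  have huA : (fun _ => 1) ᵥ* A = 0 := by
    ext j
    simp [vecMul, dotProduct, hA]
  refine ⟨?_, fun v => ?_⟩
  · subst hP hΦ
    exact add_mul_one_add_smul_mul_add_eq_self hα (vecMulVec_mul_vecMulVec_self huw)
      (vecMulVec_mul_mul_eq_zero huA X) (mul_mul_vecMulVec_eq_zero hXw A _)
      (mul_mul_self_of_mul_eq_smul_one hXA)
  · have hMw : (A * X) *ᵥ w = (0 : ℝ) • w := by
      rw [← mulVec_mulVec, hXw, mulVec_zero, zero_smul]
    have hc : 1 + α * (α - 1) * α⁻¹ = α := by field_simp; ring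
    rw [hΦ, mulVec_add, one_add_smul_mulVec_of_mulVec_eq_smul _ hMw,
      one_add_smul_mulVec_of_mulVec_eq_smul _ (mul_mulVec_mulVec_of_mul_eq_smul_one hXA v), hc,
      mul_zero, add_zero, one_smul]
end

section
/- Let d ≥ 2, let S₁, …, Sₙ be d×d real symmetric matrices each with trace 1 and with trace of its square equal to 1 (tr(Sₘ²) = 1, corresponding to pure states in real quantum theory), let t₁, …, tₙ be real numbers with ∑ₘ tₘ·Sₘ = I_d, and let α be a nonzero real number. Suppose the d²×d² real matrix C with entries C_{(i,j),(k,l)} = ∑ₘ tₘ · Sₘ[i,j] · Sₘ[k,l] satisfies C = (1/α)·Π + (1 − 1/α)·(1/d)·J, where Π is the d²×d² matrix (1/2)·(I_{d²} + SWAP) with SWAP_{(i,j),(k,l)} = δ_{il}·δ_{jk}, and J_{(i,j),(k,l)} = δ_{ij}·δ_{kl}. Then α = (d + 2)/2. -/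
/-!
Taking the trace of the depolarizing identity pins down `α`. On the left, purity and symmetry
give `tr C = ∑ₘ tₘ tr(Sₘ²) = ∑ₘ tₘ`, which is `tr(∑ₘ tₘ Sₘ) = tr I = d`. On the right,
`tr Π = d(d+1)/2` (the dimension of the symmetric matrices) and `tr J = d`, so
`d = α⁻¹ d(d+1)/2 + (1 - α⁻¹)`, i.e. `d - 1 = α⁻¹ (d - 1)(d + 2)/2`, and `d ≠ 1` forces
`α = (d + 2)/2`.
-/

open Matrix

section ChannelOperator

variable {ι M R : Type*} [Fintype ι] [Fintype M]

/-- The operator `∑ₘ tₘ vec(Sₘ) vec(Sₘ)ᵀ` on row-major vectorized matrices. -/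
def channelOperator [CommSemiring R] (t : M → R) (S : M → Matrix ι ι R) :
    Matrix (ι × ι) (ι × ι) R :=
  of fun p q => ∑ m, t m * S m p.1 p.2 * S m q.1 q.2

theorem trace_channelOperator [CommSemiring R] (t : M → R) (S : M → Matrix ι ι R) :
    (channelOperator t S).trace = ∑ m, t m * (S m * (S m)ᵀ).trace := by
  simp only [channelOperator, trace, diag, of_apply, mul_apply, transpose_apply,
    Fintype.sum_prod_type, Finset.mul_sum, mul_assoc]
  simp_rw [Finset.sum_comm (γ := M)]

theorem trace_channelOperator_of_pure [CommSemiring R] {t : M → R} {S : M → Matrix ι ι R}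
    (hsymm : ∀ m, (S m)ᵀ = S m) (hpure : ∀ m, (S m * S m).trace = 1) :
    (channelOperator t S).trace = ∑ m, t m := by
  simp [trace_channelOperator, hsymm, hpure]

theorem sum_weights_eq_card [CommSemiring R] [DecidableEq ι] {t : M → R}
    {S : M → Matrix ι ι R} (htr : ∀ m, (S m).trace = 1) (hres : ∑ m, t m • S m = 1) :
    ∑ m, t m = Fintype.card ι := by
  simpa [trace_sum, trace_smul, htr] using congrArg trace hres

end ChannelOperator

section VectorizedMatrices

/-- The swap `vec(A) ↦ vec(Aᵀ)` of row-major vectorized matrices. -/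
def swapMatrix (ι R : Type*) [DecidableEq ι] [Zero R] [One R] : Matrix (ι × ι) (ι × ι) R :=
  of fun p q => if p.1 = q.2 ∧ p.2 = q.1 then 1 else 0

def vecOneOuter (ι R : Type*) [DecidableEq ι] [MulZeroOneClass R] :
    Matrix (ι × ι) (ι × ι) R :=
  of fun p q => (if p.1 = p.2 then 1 else 0) * (if q.1 = q.2 then 1 else 0)

variable {ι R : Type*} [Fintype ι] [DecidableEq ι] [Semiring R]

theorem trace_swapMatrix : (swapMatrix ι R).trace = Fintype.card ι := by
  rw [swapMatrix, trace, Fintype.sum_prod_type]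
  simp [eq_comm]

theorem trace_vecOneOuter : (vecOneOuter ι R).trace = Fintype.card ι := by
  simp [vecOneOuter, trace, Fintype.sum_prod_type]

end VectorizedMatrices

theorem eq_of_trace_depolarizing {d α : ℝ} (hd : d ≠ 1) (hα : α ≠ 0)
    (h : d = α⁻¹ * ((d * d + d) / 2) + (1 - α⁻¹)) : α = (d + 2) / 2 := by
  have hd' : d - 1 ≠ 0 := sub_ne_zero.mpr hd
  field_simp at h
  apply mul_left_cancel₀ hd'
  linear_combination h / 2

/-- For a pure weight-morphophoric reference device in real
quantum theory (real symmetric post-measurement states `Sₘ` with `tr Sₘ = 1` and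
`tr Sₘ² = 1`, effects `tₘ·Sₘ` resolving the identity), if the channel operator
`C_{(i,j),(k,l)} = ∑ₘ tₘ·Sₘ[i,j]·Sₘ[k,l]` is depolarizing with respect to the
symmetric projector `Π = (1/2)(I + SWAP)`, i.e.
`C = (1/α)·Π + (1 − 1/α)·(1/d)·J`, then `α = (d + 2)/2`. -/
theorem real_pure_weight_morphophoric_alpha
    (d n : ℕ) (hd : 2 ≤ d)
    (S : Fin n → Matrix (Fin d) (Fin d) ℝ)
    (hsymm : ∀ m, (S m)ᵀ = S m)
    (htr : ∀ m, (S m).trace = 1)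
    (hpure : ∀ m, (S m * S m).trace = 1)
    (t : Fin n → ℝ) (hres : ∑ m, t m • S m = 1)
    (α : ℝ) (hα : α ≠ 0)
    (C : Matrix (Fin d × Fin d) (Fin d × Fin d) ℝ)
    (hC : C = Matrix.of fun p q => ∑ m, t m * S m p.1 p.2 * S m q.1 q.2)
    (SWAP : Matrix (Fin d × Fin d) (Fin d × Fin d) ℝ)
    (hSWAP : SWAP = Matrix.of fun p q : Fin d × Fin d =>
      if p.1 = q.2 ∧ p.2 = q.1 then 1 else 0)
    (Psym : Matrix (Fin d × Fin d) (Fin d × Fin d) ℝ)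
    (hPsym : Psym = (2 : ℝ)⁻¹ • (1 + SWAP))
    (J : Matrix (Fin d × Fin d) (Fin d × Fin d) ℝ)
    (hJ : J = Matrix.of fun p q : Fin d × Fin d =>
      (if p.1 = p.2 then 1 else 0) * (if q.1 = q.2 then 1 else 0))
    (hdep : C = α⁻¹ • Psym + (1 - α⁻¹) • ((d : ℝ)⁻¹ • J)) :
    α = (d + 2) / 2 := by
  have hd0 : (d : ℝ) ≠ 0 := by positivity
  have hd1 : (d : ℝ) ≠ 1 := by exact_mod_cast (by omega : d ≠ 1)
  have htrC : C.trace = d := by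
    rw [show C = channelOperator t S from hC, trace_channelOperator_of_pure hsymm hpure,
      sum_weights_eq_card htr hres, Fintype.card_fin]
  have htrSWAP : SWAP.trace = d := by
    rw [show SWAP = swapMatrix (Fin d) ℝ from hSWAP, trace_swapMatrix, Fintype.card_fin]
  have htrJ : J.trace = d := by
    rw [show J = vecOneOuter (Fin d) ℝ from hJ, trace_vecOneOuter, Fintype.card_fin]
  refine eq_of_trace_depolarizing hd1 hα ?_
  have htrace := congrArg trace hdep
  simp only [hPsym, trace_add, trace_smul, trace_one, Fintype.card_prod, Fintype.card_fin,
    htrC, htrSWAP, htrJ, smul_eq_mul, inv_mul_cancel₀ hd0] at htrace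
  push_cast at htrace
  linear_combination htrace
end
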